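/- Fix T > 0, η ∈ (0,1), and N₂ ∈ ℕ, and for each N₁ ∈ ℕ take the sampling step Δ := T/N₁. Then there exist constants γ_y > 0, γ_λ > 0, Γ > 0 and N₀ ∈ ℕ such that for every N₁ ≥ N₀ and every n ∈ {1,…,⌊η·N₁⌋}: |𝒦_y(n)| ≤ γ_y·exp(−Γ·N₁²) and |𝒦_λ(n)| ≤ γ_λ·exp(−Γ·N₁²). -/

import Mathlib

/-- The nodes `φ_n = exp(-Δ·λ_n)`. -/
noncomputable def phi (lam : ℕ → ℝ) (Δ : ℝ) (n : ℕ) : ℝ := Real.exp (-Δ * lam n)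

/-- Lagrange basis polynomial `L_n(z)` on the nodes `φ_1, …, φ_{N₁}`. -/
noncomputable def Lag (lam : ℕ → ℝ) (Δ : ℝ) (N₁ n : ℕ) (z : ℝ) : ℝ :=
  ∏ j ∈ (Finset.Icc 1 N₁).erase n, (z - phi lam Δ j) / (phi lam Δ n - phi lam Δ j)

/-- `L_n'(φ_n) = Σ_{k ≤ N₁, k ≠ n} 1/(φ_n − φ_k)`. -/
noncomputable def LagD (lam : ℕ → ℝ) (Δ : ℝ) (N₁ n : ℕ) : ℝ :=
  ∑ k ∈ (Finset.Icc 1 N₁).erase n, 1 / (phi lam Δ n - phi lam Δ k)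

/-- Hermite basis polynomial `H_n(z) = (1 − 2(z − φ_n)L_n'(φ_n))·L_n(z)²`. -/
noncomputable def HermH (lam : ℕ → ℝ) (Δ : ℝ) (N₁ n : ℕ) (z : ℝ) : ℝ :=
  (1 - 2 * (z - phi lam Δ n) * LagD lam Δ N₁ n) * (Lag lam Δ N₁ n z) ^ 2

/-- Hermite basis polynomial `H̃_n(z) = (z − φ_n)·L_n(z)²`. -/
noncomputable def HermHt (lam : ℕ → ℝ) (Δ : ℝ) (N₁ n : ℕ) (z : ℝ) : ℝ :=
  (z - phi lam Δ n) * (Lag lam Δ N₁ n z) ^ 2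

/-- First-order condition number for the amplitudes:
`𝒦_y(n) = Σ_{m=N₁+1}^{N₁+N₂} y_m·H_n(φ_m)`. -/
noncomputable def Ky (lam y : ℕ → ℝ) (Δ : ℝ) (N₁ N₂ n : ℕ) : ℝ :=
  ∑ m ∈ Finset.Icc (N₁ + 1) (N₁ + N₂), y m * HermH lam Δ N₁ n (phi lam Δ m)

/-- First-order condition number for the exponents:
`𝒦_λ(n) = −(Δ·y_n·φ_n)⁻¹·Σ_{m=N₁+1}^{N₁+N₂} y_m·H̃_n(φ_m)`. -/
noncomputable def Kl (lam y : ℕ → ℝ) (Δ : ℝ) (N₁ N₂ n : ℕ) : ℝ :=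
  -(Δ * y n * phi lam Δ n)⁻¹ *
    ∑ m ∈ Finset.Icc (N₁ + 1) (N₁ + N₂), y m * HermHt lam Δ N₁ n (phi lam Δ m)

/-!
Quadratic gaps make the nodes relatively separated: for `i < j`,
`φ_j ≤ φ_i · exp(-Δυ(j² - i²))`, hence `max(φ_i, φ_j) / |φ_i - φ_j| ≤ 1 + 1/(Δυ(j - i)²)`.
For `m > N₁` the factor `(φ_m - φ_j)/(φ_n - φ_j)` of `L_n(φ_m)` is therefore at most
`exp(-Δυ(j² - n²)) · exp(1/(Δυ(j - n)²))` when `j > n` and at most `exp(1/(Δυ(j - n)²))`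
when `j < n`; as `Σ 1/k² ≤ 2`, this gives
`|L_n(φ_m)| ≤ exp(-Δυ Σ_{n<j≤N₁} (j² - n²) + 4/(Δυ))`. With `Δ = T/N₁` and `n ≤ ηN₁` the
exponent is at most `-(Tυ(1-η)³/3) N₁² + O(N₁)`. Both `H_n(φ_m)` and `H̃_n(φ_m)` contain
`L_n(φ_m)²`, while the other ingredients grow at most linearly in `N₁`
(`|L_n'(φ_n)| φ_n ≤ N₁ + 4/(Δυ)`, `1/Δ = N₁/T`); halving the Gaussian rate absorbs them.
-/

open Finset Real Filter

lemma one_div_one_sub_exp_neg_le {x : ℝ} (hx : 0 < x) : 1 / (1 - exp (-x)) ≤ 1 + 1 / x := by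
  have h1 : exp (-x) * (x + 1) ≤ 1 :=
    calc exp (-x) * (x + 1) ≤ exp (-x) * exp x := by gcongr; exact add_one_le_exp x
      _ = 1 := by rw [← exp_add, neg_add_cancel, exp_zero]
  have h2 : 0 < 1 - exp (-x) := sub_pos.2 (exp_lt_one_iff.2 (neg_lt_zero.2 hx))
  have h3 : (1 + 1 / x) * (1 - exp (-x)) = 1 + (1 - exp (-x) * (x + 1)) / x := by
    field_simp; ring
  rw [div_le_iff₀ h2, h3]
  linarith [div_nonneg (sub_nonneg.2 h1) hx.le]

lemma abs_sum_le_card_mul {ι : Type*} {s : Finset ι} {f : ι → ℝ} {B : ℝ}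
    (hf : ∀ i ∈ s, |f i| ≤ B) : |∑ i ∈ s, f i| ≤ s.card * B :=
  (abs_sum_le_sum_abs f s).trans <| by simpa using sum_le_card_nsmul s _ B hf

lemma sum_Ioc_inv_sq_sub_le (n N : ℕ) : ∑ j ∈ Ioc n N, (((j : ℝ) - n) ^ 2)⁻¹ ≤ 2 := by
  have h : ∑ j ∈ Ioc n N, (((j : ℝ) - n) ^ 2)⁻¹ = ∑ k ∈ Ioo 0 (N - n + 1), ((k : ℝ) ^ 2)⁻¹ := by
    refine sum_nbij' (· - n) (· + n) ?_ ?_ ?_ ?_ ?_ <;> intro j hj <;>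
      simp only [mem_Ioc, mem_Ioo] at hj ⊢
    all_goals first | omega | rw [Nat.cast_sub (by omega)]
  simpa [h] using sum_Ioo_inv_sq_le (α := ℝ) 0 (N - n + 1)

lemma sum_Ico_inv_sq_sub_le (n : ℕ) : ∑ j ∈ Ico 1 n, (((j : ℝ) - n) ^ 2)⁻¹ ≤ 2 := by
  have h : ∑ j ∈ Ico 1 n, (((j : ℝ) - n) ^ 2)⁻¹ = ∑ k ∈ Ioo 0 n, ((k : ℝ) ^ 2)⁻¹ := by
    refine sum_nbij' (n - ·) (n - ·) ?_ ?_ ?_ ?_ ?_ <;> intro j hj <;>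
      simp only [mem_Ico, mem_Ioo] at hj ⊢
    all_goals first | omega | rw [Nat.cast_sub (by omega), ← neg_sub, neg_sq]
  simpa [h] using sum_Ioo_inv_sq_le (α := ℝ) 0 n

lemma sum_erase_inv_sq_sub_le (N n : ℕ) :
    ∑ j ∈ (Icc 1 N).erase n, (((j : ℝ) - n) ^ 2)⁻¹ ≤ 4 := by
  have hsub : (Icc 1 N).erase n ⊆ Ico 1 n ∪ Ioc n N := by
    intro j; simp only [mem_erase, mem_Icc, mem_union, mem_Ico, mem_Ioc]; omega
  have hdisj : Disjoint (Ico 1 n) (Ioc n N) := by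
    rw [disjoint_left]; intro j; simp only [mem_Ico, mem_Ioc]; omega
  calc ∑ j ∈ (Icc 1 N).erase n, (((j : ℝ) - n) ^ 2)⁻¹
      ≤ ∑ j ∈ Ico 1 n ∪ Ioc n N, (((j : ℝ) - n) ^ 2)⁻¹ :=
        sum_le_sum_of_subset_of_nonneg hsub fun _ _ _ ↦ by positivity
    _ ≤ 4 := by
        rw [sum_union hdisj]; linarith [sum_Ico_inv_sq_sub_le n, sum_Ioc_inv_sq_sub_le n N]

lemma cube_div_three_le_sum_Ioc_sq {n N : ℕ} (h : n ≤ N) :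
    ((N : ℝ) - n) ^ 3 / 3 ≤ ∑ j ∈ Ioc n N, ((j : ℝ) - n) ^ 2 := by
  induction N, h using Nat.le_induction with
  | base => simp
  | succ N hN ih =>
    rw [sum_Ioc_succ_top hN]
    have : (0 : ℝ) ≤ N - n := sub_nonneg.2 (by exact_mod_cast hN)
    push_cast
    nlinarith

def HasQuadraticGaps (lam : ℕ → ℝ) (υ : ℝ) : Prop :=
  ∀ i j : ℕ, 1 ≤ i → i ≤ j → υ * ((j : ℝ) ^ 2 - (i : ℝ) ^ 2) ≤ lam j - lam i

section Nodes

variable {lam : ℕ → ℝ} {Δ υ : ℝ}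

lemma phi_pos (lam : ℕ → ℝ) (Δ : ℝ) (j : ℕ) : 0 < phi lam Δ j := exp_pos _

lemma phi_le_mul_exp (hΔ : 0 ≤ Δ) (hgap : HasQuadraticGaps lam υ) {i j : ℕ} (hi : 1 ≤ i)
    (hij : i ≤ j) :
    phi lam Δ j ≤ phi lam Δ i * exp (-(Δ * υ * ((j : ℝ) ^ 2 - (i : ℝ) ^ 2))) := by
  have hsplit : phi lam Δ j = phi lam Δ i * exp (-(Δ * (lam j - lam i))) := by
    simp only [phi, ← exp_add]; ring_nf
  rw [hsplit]
  refine mul_le_mul_of_nonneg_left (exp_le_exp.2 (neg_le_neg ?_)) (phi_pos lam Δ i).le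
  rw [mul_assoc]
  exact mul_le_mul_of_nonneg_left (hgap i j hi hij) hΔ

lemma phi_lt_phi (hΔ : 0 < Δ) (hυ : 0 < υ) (hgap : HasQuadraticGaps lam υ) {i j : ℕ}
    (hi : 1 ≤ i) (hij : i < j) : phi lam Δ j < phi lam Δ i := by
  have hsq : (0 : ℝ) < (j : ℝ) ^ 2 - (i : ℝ) ^ 2 := by
    rw [sub_pos]; gcongr
  calc phi lam Δ j ≤ phi lam Δ i * exp (-(Δ * υ * ((j : ℝ) ^ 2 - (i : ℝ) ^ 2))) :=
        phi_le_mul_exp hΔ.le hgap hi hij.le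
    _ < phi lam Δ i * 1 :=
        mul_lt_mul_of_pos_left (exp_lt_one_iff.2 (neg_lt_zero.2 (by positivity))) (phi_pos lam Δ i)
    _ = phi lam Δ i := mul_one _

lemma abs_phi_sub_phi_le (hΔ : 0 < Δ) (hυ : 0 < υ) (hgap : HasQuadraticGaps lam υ) {n m : ℕ}
    (hn : 1 ≤ n) (hnm : n < m) : |phi lam Δ m - phi lam Δ n| ≤ phi lam Δ n := by
  rw [abs_of_neg (sub_neg.2 (phi_lt_phi hΔ hυ hgap hn hnm))]
  linarith [phi_pos lam Δ m]

lemma max_phi_div_abs_sub_le_of_lt (hΔ : 0 < Δ) (hυ : 0 < υ) (hgap : HasQuadraticGaps lam υ)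
    {i j : ℕ} (hi : 1 ≤ i) (hij : i < j) :
    max (phi lam Δ i) (phi lam Δ j) / |phi lam Δ i - phi lam Δ j| ≤
      1 + 1 / (Δ * υ * ((j : ℝ) - i) ^ 2) := by
  set x := Δ * υ * ((j : ℝ) - i) ^ 2 with hx_def
  have hji : (i : ℝ) < j := by exact_mod_cast hij
  have hx : 0 < x := by have := sub_pos.2 hji; positivity
  have hlt := phi_lt_phi hΔ hυ hgap hi hij
  have hsep : phi lam Δ i * (1 - exp (-x)) ≤ phi lam Δ i - phi lam Δ j := by
    have hxle : x ≤ Δ * υ * ((j : ℝ) ^ 2 - (i : ℝ) ^ 2) := by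
      have : (0 : ℝ) ≤ i := Nat.cast_nonneg i
      rw [hx_def]; gcongr; nlinarith
    have := phi_le_mul_exp hΔ.le hgap hi hij.le
    have : exp (-(Δ * υ * ((j : ℝ) ^ 2 - (i : ℝ) ^ 2))) ≤ exp (-x) := by gcongr
    nlinarith [phi_pos lam Δ i]
  have hpos : 0 < phi lam Δ i * (1 - exp (-x)) :=
    mul_pos (phi_pos lam Δ i) (sub_pos.2 (exp_lt_one_iff.2 (neg_lt_zero.2 hx)))
  rw [max_eq_left hlt.le, abs_of_pos (sub_pos.2 hlt)]
  calc phi lam Δ i / (phi lam Δ i - phi lam Δ j)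
      ≤ phi lam Δ i / (phi lam Δ i * (1 - exp (-x))) := by gcongr; exact (phi_pos lam Δ i).le
    _ = 1 / (1 - exp (-x)) := by rw [div_mul_eq_div_div, div_self (phi_pos lam Δ i).ne']
    _ ≤ 1 + 1 / x := one_div_one_sub_exp_neg_le hx

lemma max_phi_div_abs_sub_le (hΔ : 0 < Δ) (hυ : 0 < υ) (hgap : HasQuadraticGaps lam υ)
    {i j : ℕ} (hi : 1 ≤ i) (hj : 1 ≤ j) (hij : i ≠ j) :
    max (phi lam Δ i) (phi lam Δ j) / |phi lam Δ i - phi lam Δ j| ≤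
      1 + 1 / (Δ * υ * ((j : ℝ) - i) ^ 2) := by
  rcases hij.lt_or_gt with hlt | hgt
  · exact max_phi_div_abs_sub_le_of_lt hΔ hυ hgap hi hlt
  · have h := max_phi_div_abs_sub_le_of_lt hΔ hυ hgap hj hgt
    rwa [max_comm, abs_sub_comm, ← neg_sub (j : ℝ) (i : ℝ), neg_sq] at h

end Nodes

noncomputable def lagrangeDecay (Δ υ : ℝ) (N n : ℕ) : ℝ :=
  exp (-(Δ * υ) * ∑ j ∈ Ioc n N, ((j : ℝ) ^ 2 - (n : ℝ) ^ 2) + 4 / (Δ * υ))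

section Lagrange

variable {lam : ℕ → ℝ} {Δ υ : ℝ}

lemma abs_lagD_mul_phi_le (hΔ : 0 < Δ) (hυ : 0 < υ) (hgap : HasQuadraticGaps lam υ)
    {N n : ℕ} (hn : 1 ≤ n) : |LagD lam Δ N n| * phi lam Δ n ≤ N + 4 / (Δ * υ) := by
  set s := (Icc 1 N).erase n
  have hterm : ∀ j ∈ s, |1 / (phi lam Δ n - phi lam Δ j)| * phi lam Δ n ≤
      1 + (Δ * υ)⁻¹ * (((j : ℝ) - n) ^ 2)⁻¹ := by
    intro j hj
    obtain ⟨hjn, hj1, -⟩ : j ≠ n ∧ 1 ≤ j ∧ j ≤ N := by simpa [s] using hj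
    calc |1 / (phi lam Δ n - phi lam Δ j)| * phi lam Δ n
        = phi lam Δ n / |phi lam Δ n - phi lam Δ j| := by
          rw [abs_div, abs_one, div_mul_eq_mul_div, one_mul]
      _ ≤ max (phi lam Δ n) (phi lam Δ j) / |phi lam Δ n - phi lam Δ j| := by
          gcongr; exact le_max_left _ _
      _ ≤ 1 + 1 / (Δ * υ * ((j : ℝ) - n) ^ 2) :=
          max_phi_div_abs_sub_le hΔ hυ hgap hn hj1 (Ne.symm hjn)
      _ = 1 + (Δ * υ)⁻¹ * (((j : ℝ) - n) ^ 2)⁻¹ := by rw [one_div, mul_inv]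
  have hcard : (s.card : ℝ) ≤ N := by
    have := card_le_card (erase_subset n (Icc 1 N))
    simp only [Nat.card_Icc, add_tsub_cancel_right] at this
    exact_mod_cast this
  calc |LagD lam Δ N n| * phi lam Δ n
      ≤ ∑ j ∈ s, |1 / (phi lam Δ n - phi lam Δ j)| * phi lam Δ n := by
        rw [← sum_mul, LagD]
        exact mul_le_mul_of_nonneg_right (abs_sum_le_sum_abs _ _) (phi_pos lam Δ n).le
    _ ≤ ∑ j ∈ s, (1 + (Δ * υ)⁻¹ * (((j : ℝ) - n) ^ 2)⁻¹) := sum_le_sum hterm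
    _ = s.card + (Δ * υ)⁻¹ * ∑ j ∈ s, (((j : ℝ) - n) ^ 2)⁻¹ := by
        rw [sum_add_distrib, ← mul_sum, sum_const, nsmul_one]
    _ ≤ N + (Δ * υ)⁻¹ * 4 := by
        gcongr; exact sum_erase_inv_sq_sub_le N n
    _ = N + 4 / (Δ * υ) := by ring

lemma abs_lag_factor_le (hΔ : 0 < Δ) (hυ : 0 < υ) (hgap : HasQuadraticGaps lam υ)
    {N n j m : ℕ} (hn : 1 ≤ n) (hj : j ∈ (Icc 1 N).erase n) (hm : N < m) :
    |(phi lam Δ m - phi lam Δ j) / (phi lam Δ n - phi lam Δ j)| ≤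
      exp (-(if n < j then Δ * υ * ((j : ℝ) ^ 2 - (n : ℝ) ^ 2) else 0)) *
        exp ((Δ * υ)⁻¹ * (((j : ℝ) - n) ^ 2)⁻¹) := by
  obtain ⟨hjn, hj1, hjN⟩ : j ≠ n ∧ 1 ≤ j ∧ j ≤ N := by simpa using hj
  set e := exp (-(if n < j then Δ * υ * ((j : ℝ) ^ 2 - (n : ℝ) ^ 2) else 0))
  have hnum := abs_phi_sub_phi_le hΔ hυ hgap hj1 (hjN.trans_lt hm)
  have htail : phi lam Δ j ≤ max (phi lam Δ n) (phi lam Δ j) * e := by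
    by_cases hnj : n < j
    · calc phi lam Δ j ≤ phi lam Δ n * e := by
            simpa [e, hnj] using phi_le_mul_exp hΔ.le hgap hn hnj.le
        _ ≤ max (phi lam Δ n) (phi lam Δ j) * e := by gcongr; exact le_max_left _ _
    · simp [e, hnj]
  have hsep := max_phi_div_abs_sub_le hΔ hυ hgap hn hj1 (Ne.symm hjn)
  rw [one_div, mul_inv] at hsep
  rw [abs_div]
  calc |phi lam Δ m - phi lam Δ j| / |phi lam Δ n - phi lam Δ j|
      ≤ max (phi lam Δ n) (phi lam Δ j) * e / |phi lam Δ n - phi lam Δ j| := by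
        gcongr; exact hnum.trans htail
    _ = e * (max (phi lam Δ n) (phi lam Δ j) / |phi lam Δ n - phi lam Δ j|) := by ring
    _ ≤ e * exp ((Δ * υ)⁻¹ * (((j : ℝ) - n) ^ 2)⁻¹) := by
        gcongr
        linarith [add_one_le_exp ((Δ * υ)⁻¹ * (((j : ℝ) - n) ^ 2)⁻¹)]

lemma abs_lag_phi_le (hΔ : 0 < Δ) (hυ : 0 < υ) (hgap : HasQuadraticGaps lam υ)
    {N n m : ℕ} (hn : 1 ≤ n) (hm : N < m) :
    |Lag lam Δ N n (phi lam Δ m)| ≤ lagrangeDecay Δ υ N n := by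
  set s := (Icc 1 N).erase n
  have hfilter : s.filter (n < ·) = Ioc n N := by
    ext j; simp only [s, mem_filter, mem_erase, mem_Icc, mem_Ioc]; omega
  calc |Lag lam Δ N n (phi lam Δ m)|
      = ∏ j ∈ s, |(phi lam Δ m - phi lam Δ j) / (phi lam Δ n - phi lam Δ j)| := by
        rw [Lag, abs_prod]
    _ ≤ ∏ j ∈ s, (exp (-(if n < j then Δ * υ * ((j : ℝ) ^ 2 - (n : ℝ) ^ 2) else 0)) *
          exp ((Δ * υ)⁻¹ * (((j : ℝ) - n) ^ 2)⁻¹)) :=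
        prod_le_prod (fun _ _ ↦ abs_nonneg _) fun j hj ↦ abs_lag_factor_le hΔ hυ hgap hn hj hm
    _ = exp (-(Δ * υ) * ∑ j ∈ Ioc n N, ((j : ℝ) ^ 2 - (n : ℝ) ^ 2) +
          (Δ * υ)⁻¹ * ∑ j ∈ s, (((j : ℝ) - n) ^ 2)⁻¹) := by
        rw [← hfilter, sum_filter, mul_sum, mul_sum, ← sum_add_distrib, exp_sum]
        refine prod_congr rfl fun j _ ↦ ?_
        split_ifs <;> rw [← exp_add] <;> ring_nf
    _ ≤ lagrangeDecay Δ υ N n := by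
        rw [lagrangeDecay, div_eq_mul_inv 4, mul_comm 4]
        gcongr; exact sum_erase_inv_sq_sub_le N n

end Lagrange

section Hermite

variable {lam : ℕ → ℝ} {Δ υ : ℝ}

lemma abs_hermH_phi_le (hΔ : 0 < Δ) (hυ : 0 < υ) (hgap : HasQuadraticGaps lam υ)
    {N n m : ℕ} (hn : 1 ≤ n) (hnN : n ≤ N) (hm : N < m) :
    |HermH lam Δ N n (phi lam Δ m)| ≤ (1 + 2 * (N + 4 / (Δ * υ))) * lagrangeDecay Δ υ N n ^ 2 := by
  have hφ := abs_phi_sub_phi_le hΔ hυ hgap hn (hnN.trans_lt hm)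
  have hD := abs_lagD_mul_phi_le hΔ hυ hgap (N := N) hn
  have hfactor : |1 - 2 * (phi lam Δ m - phi lam Δ n) * LagD lam Δ N n| ≤
      1 + 2 * (N + 4 / (Δ * υ)) :=
    calc |1 - 2 * (phi lam Δ m - phi lam Δ n) * LagD lam Δ N n|
        ≤ 1 + 2 * (|phi lam Δ m - phi lam Δ n| * |LagD lam Δ N n|) := by
          simpa [abs_mul, mul_assoc] using abs_sub (1 : ℝ) (2 * (phi lam Δ m - phi lam Δ n) *
            LagD lam Δ N n)
      _ ≤ 1 + 2 * (phi lam Δ n * |LagD lam Δ N n|) := by gcongr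
      _ ≤ 1 + 2 * (N + 4 / (Δ * υ)) := by linarith [mul_comm (phi lam Δ n) |LagD lam Δ N n|]
  rw [HermH, abs_mul, abs_pow]
  gcongr
  exact abs_lag_phi_le hΔ hυ hgap hn hm

lemma abs_hermHt_phi_le (hΔ : 0 < Δ) (hυ : 0 < υ) (hgap : HasQuadraticGaps lam υ)
    {N n m : ℕ} (hn : 1 ≤ n) (hnN : n ≤ N) (hm : N < m) :
    |HermHt lam Δ N n (phi lam Δ m)| ≤ phi lam Δ n * lagrangeDecay Δ υ N n ^ 2 := by
  have hφ := abs_phi_sub_phi_le hΔ hυ hgap hn (hnN.trans_lt hm)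
  rw [HermHt, abs_mul, abs_pow]
  exact mul_le_mul hφ (pow_le_pow_left₀ (abs_nonneg _) (abs_lag_phi_le hΔ hυ hgap hn hm) 2)
    (by positivity) (phi_pos lam Δ n).le

end Hermite

lemma abs_sum_Icc_mul_le {y g : ℕ → ℝ} {ℓ B : ℝ} (hy : ∀ m, 1 ≤ m → |y m| ≤ ℓ) (N N₂ : ℕ)
    (hg : ∀ m, N < m → |g m| ≤ B) :
    |∑ m ∈ Icc (N + 1) (N + N₂), y m * g m| ≤ N₂ * (ℓ * B) := by
  have hℓ : 0 ≤ ℓ := (abs_nonneg _).trans (hy 1 le_rfl)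
  have hcard : (Icc (N + 1) (N + N₂)).card = N₂ := by simp
  refine (abs_sum_le_card_mul fun m hm ↦ ?_).trans_eq (by rw [hcard])
  obtain ⟨hm1, -⟩ := mem_Icc.1 hm
  rw [abs_mul]
  exact mul_le_mul (hy m (by omega)) (hg m (by omega)) (abs_nonneg _) hℓ

section ConditionNumbers

variable {lam y : ℕ → ℝ} {Δ υ ℓ : ℝ}

lemma abs_Ky_le (hΔ : 0 < Δ) (hυ : 0 < υ) (hgap : HasQuadraticGaps lam υ)
    (hy : ∀ m, 1 ≤ m → |y m| ≤ ℓ) {N N₂ n : ℕ} (hn : 1 ≤ n) (hnN : n ≤ N) :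
    |Ky lam y Δ N N₂ n| ≤
      N₂ * (ℓ * ((1 + 2 * (N + 4 / (Δ * υ))) * lagrangeDecay Δ υ N n ^ 2)) :=
  abs_sum_Icc_mul_le hy N N₂ fun _ hm ↦ abs_hermH_phi_le hΔ hυ hgap hn hnN hm

lemma abs_Kl_le (hΔ : 0 < Δ) (hυ : 0 < υ) (hgap : HasQuadraticGaps lam υ) (hℓ : 0 < ℓ)
    (hy : ∀ m, 1 ≤ m → |y m| ≤ ℓ) {N N₂ n : ℕ} (hn : 1 ≤ n) (hnN : n ≤ N) (hyn : ℓ⁻¹ ≤ |y n|) :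
    |Kl lam y Δ N N₂ n| ≤ N₂ * ℓ ^ 2 / Δ * lagrangeDecay Δ υ N n ^ 2 := by
  have hsum := abs_sum_Icc_mul_le hy N N₂ fun _ hm ↦ abs_hermHt_phi_le hΔ hυ hgap hn hnN hm
  have hyn' : 0 < |y n| := (inv_pos.2 hℓ).trans_le hyn
  have hφ := phi_pos lam Δ n
  rw [Kl, abs_mul, abs_neg, abs_inv, abs_mul, abs_mul, abs_of_pos hΔ, abs_of_pos hφ]
  calc (Δ * |y n| * phi lam Δ n)⁻¹ *
        |∑ m ∈ Icc (N + 1) (N + N₂), y m * HermHt lam Δ N n (phi lam Δ m)|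
      ≤ (Δ * |y n| * phi lam Δ n)⁻¹ * (N₂ * (ℓ * (phi lam Δ n * lagrangeDecay Δ υ N n ^ 2))) := by
        gcongr
    _ = N₂ * ℓ * lagrangeDecay Δ υ N n ^ 2 / (Δ * |y n|) := by field_simp
    _ ≤ N₂ * ℓ * lagrangeDecay Δ υ N n ^ 2 / (Δ * ℓ⁻¹) := by gcongr
    _ = N₂ * ℓ ^ 2 / Δ * lagrangeDecay Δ υ N n ^ 2 := by field_simp

end ConditionNumbers

lemma le_of_cast_le_mul {η : ℝ} (hη1 : η < 1) {N n : ℕ} (h : (n : ℝ) ≤ η * N) : n ≤ N := by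
  have : (n : ℝ) ≤ N := h.trans (by nlinarith [(Nat.cast_nonneg N : (0 : ℝ) ≤ N)])
  exact_mod_cast this

noncomputable def decayRate (T υ η : ℝ) : ℝ := T * υ * (1 - η) ^ 3 / 3

lemma decayRate_pos {T υ η : ℝ} (hT : 0 < T) (hυ : 0 < υ) (hη1 : η < 1) :
    0 < decayRate T υ η := by
  have := sub_pos.2 hη1; unfold decayRate; positivity

lemma lagrangeDecay_sq_le {T υ η : ℝ} (hT : 0 < T) (hυ : 0 < υ) (hη1 : η < 1) {N n : ℕ}
    (hN : 0 < N) (hn : (n : ℝ) ≤ η * N) :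
    lagrangeDecay (T / N) υ N n ^ 2 ≤
      exp (-(2 * decayRate T υ η) * N ^ 2 + 8 / (T * υ) * N) := by
  have hNR : (0 : ℝ) < N := Nat.cast_pos.2 hN
  have hnN := le_of_cast_le_mul hη1 hn
  have hS : ((1 - η) * N) ^ 3 / 3 ≤ ∑ j ∈ Ioc n N, ((j : ℝ) ^ 2 - (n : ℝ) ^ 2) :=
    calc ((1 - η) * N) ^ 3 / 3 ≤ ((N : ℝ) - n) ^ 3 / 3 := by
          have := sub_pos.2 hη1; gcongr; linarith
      _ ≤ ∑ j ∈ Ioc n N, ((j : ℝ) - n) ^ 2 := cube_div_three_le_sum_Ioc_sq hnN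
      _ ≤ ∑ j ∈ Ioc n N, ((j : ℝ) ^ 2 - (n : ℝ) ^ 2) := by
          refine sum_le_sum fun j hj ↦ ?_
          have : (n : ℝ) ≤ j := by exact_mod_cast (mem_Ioc.1 hj).1.le
          nlinarith [(Nat.cast_nonneg n : (0 : ℝ) ≤ n)]
  have h1 : T / N * υ * (((1 - η) * N) ^ 3 / 3) = decayRate T υ η * N ^ 2 := by
    unfold decayRate; field_simp
  have h2 : 4 / (T / N * υ) = 4 / (T * υ) * N := by field_simp
  have := mul_le_mul_of_nonneg_left hS (by positivity : 0 ≤ T / N * υ)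
  rw [h1] at this
  rw [lagrangeDecay, ← exp_nat_mul, h2, Nat.cast_ofNat]
  gcongr
  linear_combination 2 * this

lemma eventually_one_add_mul_mul_exp_le {c : ℝ} (hc : 0 < c) (p b : ℝ) :
    ∀ᶠ N : ℕ in atTop, (1 + p * N) * exp (-(2 * c) * N ^ 2 + b * N) ≤ exp (-c * N ^ 2) := by
  filter_upwards [eventually_ge_atTop ⌈(p + b) / c⌉₊] with N hN
  have hlin : (p + b) * N ≤ c * N ^ 2 := by
    have := (div_le_iff₀ hc).1 (Nat.ceil_le.1 hN)
    nlinarith [(Nat.cast_nonneg N : (0 : ℝ) ≤ N)]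
  calc (1 + p * N) * exp (-(2 * c) * N ^ 2 + b * N)
      ≤ exp (p * N) * exp (-(2 * c) * N ^ 2 + b * N) := by
        gcongr; linarith [add_one_le_exp (p * N)]
    _ = exp ((p + b) * N - 2 * c * N ^ 2) := by rw [← exp_add]; ring_nf
    _ ≤ exp (-c * N ^ 2) := exp_le_exp.2 (by linarith)

section Sampling

variable {lam y : ℕ → ℝ} {υ ℓ T η : ℝ} {N N₂ n : ℕ}

lemma abs_Ky_sampling_le (hυ : 0 < υ) (hgap : HasQuadraticGaps lam υ)
    (hy : ∀ m, 1 ≤ m → |y m| ≤ ℓ) (hT : 0 < T) (hη1 : η < 1) (hN : 0 < N) (hn : 1 ≤ n)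
    (hnη : (n : ℝ) ≤ η * N) :
    |Ky lam y (T / N) N N₂ n| ≤ N₂ * ℓ * ((1 + (2 + 8 / (T * υ)) * N) *
      exp (-(2 * decayRate T υ η) * N ^ 2 + 8 / (T * υ) * N)) := by
  have hNR : (0 : ℝ) < N := Nat.cast_pos.2 hN
  have hℓ : 0 ≤ ℓ := (abs_nonneg _).trans (hy 1 le_rfl)
  have hprefactor : 1 + 2 * (N + 4 / (T / N * υ)) = 1 + (2 + 8 / (T * υ)) * N := by
    field_simp; ring
  calc |Ky lam y (T / N) N N₂ n|
      ≤ N₂ * (ℓ * ((1 + 2 * (N + 4 / (T / N * υ))) * lagrangeDecay (T / N) υ N n ^ 2)) :=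
        abs_Ky_le (div_pos hT hNR) hυ hgap hy hn (le_of_cast_le_mul hη1 hnη)
    _ ≤ _ := by
        rw [hprefactor, ← mul_assoc]
        gcongr
        exact lagrangeDecay_sq_le hT hυ hη1 hN hnη

lemma abs_Kl_sampling_le (hυ : 0 < υ) (hgap : HasQuadraticGaps lam υ) (hℓ : 0 < ℓ)
    (hy : ∀ m, 1 ≤ m → ℓ⁻¹ ≤ |y m| ∧ |y m| ≤ ℓ) (hT : 0 < T) (hη1 : η < 1) (hN : 0 < N)
    (hn : 1 ≤ n) (hnη : (n : ℝ) ≤ η * N) :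
    |Kl lam y (T / N) N N₂ n| ≤ N₂ * ℓ ^ 2 / T * ((1 + 1 * N) *
      exp (-(2 * decayRate T υ η) * N ^ 2 + 8 / (T * υ) * N)) := by
  have hNR : (0 : ℝ) < N := Nat.cast_pos.2 hN
  calc |Kl lam y (T / N) N N₂ n|
      ≤ N₂ * ℓ ^ 2 / (T / N) * lagrangeDecay (T / N) υ N n ^ 2 :=
        abs_Kl_le (div_pos hT hNR) hυ hgap hℓ (fun m hm ↦ (hy m hm).2) hn
          (le_of_cast_le_mul hη1 hnη) (hy n hn).1
    _ = N₂ * ℓ ^ 2 / T * (N * lagrangeDecay (T / N) υ N n ^ 2) := by field_simp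
    _ ≤ _ := by
        gcongr
        · linarith
        · exact lagrangeDecay_sq_le hT hυ hη1 hN hnη

end Sampling

theorem stmt4_general (lam y : ℕ → ℝ) (υ Υ ℓ T η : ℝ) (N₂ : ℕ)
    (hυ : 0 < υ)
    (hgap : ∀ n m : ℕ, 1 ≤ n → n ≤ m →
      υ * ((m : ℝ) ^ 2 - (n : ℝ) ^ 2) ≤ lam m - lam n ∧
      lam m - lam n ≤ Υ * ((m : ℝ) ^ 2 - (n : ℝ) ^ 2))
    (hℓ : 1 < ℓ) (hy : ∀ n : ℕ, 1 ≤ n → ℓ⁻¹ ≤ |y n| ∧ |y n| ≤ ℓ)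
    (hT : 0 < T) (hη1 : η < 1) (hN₂ : 1 ≤ N₂) :
    ∃ γy γl Γ : ℝ, 0 < γy ∧ 0 < γl ∧ 0 < Γ ∧
      ∃ N₀ : ℕ, ∀ N₁ : ℕ, N₀ ≤ N₁ →
        ∀ n : ℕ, 1 ≤ n → n ≤ ⌊η * (N₁ : ℝ)⌋₊ →
          |Ky lam y (T / (N₁ : ℝ)) N₁ N₂ n| ≤ γy * Real.exp (-Γ * (N₁ : ℝ) ^ 2) ∧
          |Kl lam y (T / (N₁ : ℝ)) N₁ N₂ n| ≤ γl * Real.exp (-Γ * (N₁ : ℝ) ^ 2) := by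
  have hc := decayRate_pos hT hυ hη1
  have hℓ0 : 0 < ℓ := one_pos.trans hℓ
  have hgap' : HasQuadraticGaps lam υ := fun i j hi hij ↦ (hgap i j hi hij).1
  obtain ⟨N₀, hN₀⟩ := eventually_atTop.1 <|
    ((eventually_one_add_mul_mul_exp_le hc (2 + 8 / (T * υ)) (8 / (T * υ))).and
      (eventually_one_add_mul_mul_exp_le hc 1 (8 / (T * υ)))).and (eventually_gt_atTop 0)
  refine ⟨N₂ * ℓ, N₂ * ℓ ^ 2 / T, decayRate T υ η, by positivity, by positivity, hc, N₀,
    fun N hN n hn hnη ↦ ?_⟩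
  obtain ⟨⟨hKy_decay, hKl_decay⟩, hNpos⟩ := hN₀ N hN
  have hnη' : (n : ℝ) ≤ η * N := (Nat.le_floor_iff' (by omega)).1 hnη
  exact ⟨(abs_Ky_sampling_le hυ hgap' (fun m hm ↦ (hy m hm).2) hT hη1 hNpos hn hnη').trans
      (by gcongr),
    (abs_Kl_sampling_le hυ hgap' hℓ0 hy hT hη1 hNpos hn hnη').trans (by gcongr)⟩

theorem stmt4 (lam y : ℕ → ℝ) (υ Υ ℓ T η : ℝ) (N₂ : ℕ)
    (hυ : 0 < υ) (hυΥ : υ ≤ Υ)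
    (hmono : ∀ n m : ℕ, 1 ≤ n → n < m → lam n < lam m)
    (hgap : ∀ n m : ℕ, 1 ≤ n → n ≤ m →
      υ * ((m : ℝ) ^ 2 - (n : ℝ) ^ 2) ≤ lam m - lam n ∧
      lam m - lam n ≤ Υ * ((m : ℝ) ^ 2 - (n : ℝ) ^ 2))
    (hℓ : 1 < ℓ) (hy : ∀ n : ℕ, 1 ≤ n → ℓ⁻¹ ≤ |y n| ∧ |y n| ≤ ℓ)
    (hT : 0 < T) (hη : 0 < η) (hη1 : η < 1) (hN₂ : 1 ≤ N₂) :
    ∃ γy γl Γ : ℝ, 0 < γy ∧ 0 < γl ∧ 0 < Γ ∧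
      ∃ N₀ : ℕ, ∀ N₁ : ℕ, N₀ ≤ N₁ →
        ∀ n : ℕ, 1 ≤ n → n ≤ ⌊η * (N₁ : ℝ)⌋₊ →
          |Ky lam y (T / (N₁ : ℝ)) N₁ N₂ n| ≤ γy * Real.exp (-Γ * (N₁ : ℝ) ^ 2) ∧
          |Kl lam y (T / (N₁ : ℝ)) N₁ N₂ n| ≤ γl * Real.exp (-Γ * (N₁ : ℝ) ^ 2) :=
  stmt4_general lam y υ Υ ℓ T η N₂ hυ hgap hℓ hy hT hη1 hN₂
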